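/- Let U be a nonempty finite type, let X take values in {A,B}, and let Q take values in the three-element set {qA, qB, qAB} with length function ℓ(qA)=ℓ(qB)=1 and ℓ(qAB)=2. Let p be a joint probability mass function of the triple (U,X,Q) such that P(U=u)>0 for every u, satisfying decodability (P(X=A, Q=qB)=0 and P(X=B, Q=qA)=0) and privacy (Q is independent of U, i.e. P(U=u, Q=q)=P(U=u)·P(Q=q) for all u,q). Then the expected download cost satisfies E[ℓ(Q)] ≥ 2 − π(A) − π(B), where π(x) = min over u of P(X=x | U=u). -/

import Mathlib

/-- The two sources. -/
inductive Src | A | B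
deriving DecidableEq

instance : Fintype Src := ⟨{Src.A, Src.B}, fun x => by cases x <;> simp⟩

/-- The three possible queries: only source A, only source B, or both. -/
inductive Qry | qA | qB | qAB
deriving DecidableEq

instance : Fintype Qry := ⟨{Qry.qA, Qry.qB, Qry.qAB}, fun x => by cases x <;> simp⟩

/-- The length (download cost) of each query. -/
noncomputable def len : Qry → ℝ
  | Qry.qA => 1
  | Qry.qB => 1
  | Qry.qAB => 2

/-! Privacy makes `P(Q = qA)` the same under every `U = u`, and decodability forces `X = A`
whenever `Q = qA`; hence `P(Q = qA) ≤ P(X = A | U = u)` for every `u`, i.e. `P(Q = qA) ≤ π(A)`,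
and likewise `P(Q = qB) ≤ π(B)`. Since `ℓ(q) = 2 - [q = qA] - [q = qB]`, the expected cost is
exactly `2 - P(Q = qA) - P(Q = qB)`. -/

theorem Qry.sum_mul_len (f : Qry → ℝ) :
    ∑ q, f q * len q = 2 * ∑ q, f q - f Qry.qA - f Qry.qB := by
  simp only [Finset.univ, Fintype.elems, len, Finset.mem_insert, reduceCtorEq, Finset.mem_singleton,
    or_self, not_false_eq_true, Finset.sum_insert, mul_one, Finset.sum_singleton]
  ring

theorem expected_len_eq {U X : Type*} [Fintype U] [Fintype X] (p : U → X → Qry → ℝ) :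
    ∑ u, ∑ x, ∑ q, p u x q * len q
      = 2 * ∑ u, ∑ x, ∑ q, p u x q - ∑ u, ∑ x, p u x Qry.qA - ∑ u, ∑ x, p u x Qry.qB := by
  simp only [Qry.sum_mul_len, Finset.sum_sub_distrib, Finset.mul_sum]

theorem query_prob_le_cond_prob_of_private {U X Q : Type*} [Fintype U] [Fintype X] [Fintype Q]
    {p : U → X → Q → ℝ} {u : U} {x : X} {q : Q} (hnn : ∀ q', 0 ≤ p u x q')
    (hu : 0 < ∑ x, ∑ q', p u x q') (hdec : ∀ x', x' ≠ x → p u x' q = 0)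
    (hpriv : ∑ x, p u x q = (∑ x, ∑ q', p u x q') * ∑ u', ∑ x, p u' x q) :
    ∑ u', ∑ x, p u' x q ≤ (∑ q', p u x q') / ∑ x, ∑ q', p u x q' := by
  rw [le_div_iff₀ hu, mul_comm, ← hpriv, Fintype.sum_eq_single x hdec]
  exact Finset.single_le_sum (fun q' _ => hnn q') (Finset.mem_univ q)

/-- Converse bound: any joint pmf of (U,X,Q) satisfying decodability and privacy has
expected download cost at least `2 - π(A) - π(B)` where `π(x) = min_u P(X=x | U=u)`. -/
theorem converse_bound {U : Type} [Fintype U] [Nonempty U]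
    (p : U → Src → Qry → ℝ)
    (hnn : ∀ u x q, 0 ≤ p u x q)
    (hsum : ∑ u, ∑ x, ∑ q, p u x q = 1)
    (hUpos : ∀ u, 0 < ∑ x, ∑ q, p u x q)
    (hdecA : ∑ u, p u Src.A Qry.qB = 0)
    (hdecB : ∑ u, p u Src.B Qry.qA = 0)
    (hpriv : ∀ u q, ∑ x, p u x q
      = (∑ x, ∑ q', p u x q') * (∑ u', ∑ x, p u' x q)) :
    2 - Finset.univ.inf' Finset.univ_nonempty
          (fun u => (∑ q, p u Src.A q) / (∑ x, ∑ q, p u x q))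
      - Finset.univ.inf' Finset.univ_nonempty
          (fun u => (∑ q, p u Src.B q) / (∑ x, ∑ q, p u x q))
      ≤ ∑ u, ∑ x, ∑ q, p u x q * len q := by
  have hzA : ∀ u, p u Src.A Qry.qB = 0 := fun u =>
    (Finset.sum_eq_zero_iff_of_nonneg fun u _ => hnn u _ _).1 hdecA u (Finset.mem_univ u)
  have hzB : ∀ u, p u Src.B Qry.qA = 0 := fun u =>
    (Finset.sum_eq_zero_iff_of_nonneg fun u _ => hnn u _ _).1 hdecB u (Finset.mem_univ u)
  have hπA : ∑ u, ∑ x, p u x Qry.qA ≤ Finset.univ.inf' Finset.univ_nonempty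
      (fun u => (∑ q, p u Src.A q) / (∑ x, ∑ q, p u x q)) :=
    Finset.le_inf' _ _ fun u _ => query_prob_le_cond_prob_of_private (hnn u Src.A) (hUpos u)
      (fun x hx => by cases x; exacts [absurd rfl hx, hzB u]) (hpriv u Qry.qA)
  have hπB : ∑ u, ∑ x, p u x Qry.qB ≤ Finset.univ.inf' Finset.univ_nonempty
      (fun u => (∑ q, p u Src.B q) / (∑ x, ∑ q, p u x q)) :=
    Finset.le_inf' _ _ fun u _ => query_prob_le_cond_prob_of_private (hnn u Src.B) (hUpos u)
      (fun x hx => by cases x; exacts [hzA u, absurd rfl hx]) (hpriv u Qry.qB)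
  rw [expected_len_eq, hsum]
  linarith
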